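/- arXiv:2108.00452 — 5 statements merged into one kernel-verified Lean document; each statement's English description precedes it below -/
import Mathlib

section
/- Let Φ be a universal Horn sentence over a finite relational signature τ all of whose Horn clauses are complete. Then the class Models(Φ) of all finite models of Φ has the free amalgamation property (and in particular the amalgamation property). -/
open FirstOrder Language CategoryTheory

namespace AmalgamationHard

/-- An atomic formula `R(args)` over a relational language `L` with variables from `V`
(equality atoms are not permitted). -/
structure RelAtom (L : FirstOrder.Language.{0, 0}) (V : Type) where
  n : ℕ
  R : L.Relations n
  args : Fin n → V

variable {L : FirstOrder.Language.{0, 0}}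

/-- Renaming the variables of an atom. -/
def RelAtom.map {V W : Type} (f : V → W) (a : RelAtom L V) : RelAtom L W :=
  ⟨a.n, a.R, f ∘ a.args⟩

/-- Realization of an atomic formula in a structure under an assignment of the variables. -/
def RelAtom.Realize {V M : Type} [L.Structure M] (a : RelAtom L V) (v : V → M) : Prop :=
  Structure.RelMap a.R (v ∘ a.args)

/-- A Horn clause: a finite conjunction of atoms (the premise) implying either an atom or
`⊥` (conclusion `none` codes `⊥`). -/
structure HornClause (L : FirstOrder.Language.{0, 0}) (V : Type) where
  prem : List (RelAtom L V)
  concl : Option (RelAtom L V)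

/-- Realization of a Horn clause under an assignment. -/
def HornClause.Realize {V M : Type} [L.Structure M] (c : HornClause L V) (v : V → M) : Prop :=
  (∀ a ∈ c.prem, a.Realize v) → c.concl.elim False (fun a => a.Realize v)

/-- A structure satisfies a universal Horn sentence (coded as a finite list of Horn clauses,
with all variables universally quantified) if every clause holds under every assignment. -/
def Satisfies (Φ : List (HornClause L ℕ)) (M : Type) [L.Structure M] : Prop :=
  ∀ c ∈ Φ, ∀ v : ℕ → M, c.Realize v

/-- `Models Φ`: the class of all finite models of the universal Horn sentence `Φ`. -/
def Models (Φ : List (HornClause L ℕ)) : Set (Bundled L.Structure) :=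
  { M | Finite M ∧ Satisfies Φ M }

/-- The amalgamation property for a class of structures. -/
def HasAP (K : Set (Bundled.{0} L.Structure)) : Prop :=
  ∀ (A B₁ B₂ : Bundled.{0} L.Structure) (e₁ : A ↪[L] B₁) (e₂ : A ↪[L] B₂),
    A ∈ K → B₁ ∈ K → B₂ ∈ K →
      ∃ (C : Bundled.{0} L.Structure) (f₁ : B₁ ↪[L] C) (f₂ : B₂ ↪[L] C),
        C ∈ K ∧ f₁.comp e₁ = f₂.comp e₂

/-- The free amalgamation property for a class of structures. -/
def HasFreeAP (K : Set (Bundled.{0} L.Structure)) : Prop :=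
  ∀ (A B₁ B₂ : Bundled.{0} L.Structure) (e₁ : A ↪[L] B₁) (e₂ : A ↪[L] B₂),
    A ∈ K → B₁ ∈ K → B₂ ∈ K →
      ∃ (C : Bundled.{0} L.Structure) (f₁ : B₁ ↪[L] C) (f₂ : B₂ ↪[L] C),
        C ∈ K ∧ f₁.comp e₁ = f₂.comp e₂ ∧
        Set.range f₁ ∩ Set.range f₂ = Set.range (f₁.comp e₁) ∧
        Set.range (f₁.comp e₁) = Set.range (f₂.comp e₂) ∧
        ∀ (n : ℕ) (R : L.Relations n) (t : Fin n → C),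
          Structure.RelMap R t ↔
            (∃ s : Fin n → B₁, Structure.RelMap R s ∧ f₁ ∘ s = t) ∨
            (∃ s : Fin n → B₂, Structure.RelMap R s ∧ f₂ ∘ s = t)

/-- A variable occurs in an atom. -/
def RelAtom.VarOccurs {V : Type} (a : RelAtom L V) (x : V) : Prop :=
  ∃ i, a.args i = x

/-- A variable occurs in a Horn clause. -/
def HornClause.VarOccurs {V : Type} (c : HornClause L V) (x : V) : Prop :=
  (∃ a ∈ c.prem, a.VarOccurs x) ∨ (∃ a ∈ c.concl, a.VarOccurs x)

/-- A Horn clause is complete if any two distinct variables occurring in the clause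
appear jointly in some conjunct of the premise. -/
def HornClause.Complete {V : Type} (c : HornClause L V) : Prop :=
  ∀ x y : V, c.VarOccurs x → c.VarOccurs y → x ≠ y →
    ∃ a ∈ c.prem, a.VarOccurs x ∧ a.VarOccurs y

section Construction

variable {A B₁ B₂ : Type} [L.Structure A] [L.Structure B₁] [L.Structure B₂]

def Amalgam (_e₁ : A ↪[L] B₁) (e₂ : A ↪[L] B₂) : Type :=
  B₁ ⊕ {b : B₂ // b ∉ Set.range e₂}

variable (e₁ : A ↪[L] B₁) (e₂ : A ↪[L] B₂)

open Classical in
/-- The map from `B₂` into the amalgam. -/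
noncomputable def g₂ : B₂ → Amalgam e₁ e₂ :=
  fun b => if h : b ∈ Set.range e₂ then Sum.inl (e₁ h.choose) else Sum.inr ⟨b, h⟩

lemma g₂_e₂ (a : A) : g₂ e₁ e₂ (e₂ a) = Sum.inl (e₁ a) := by
  have h : (e₂ a : B₂) ∈ Set.range e₂ := ⟨a, rfl⟩
  have : h.choose = a := e₂.injective h.choose_spec
  simp [g₂, dif_pos h, this]
  rfl

lemma g₂_notMem {b : B₂} (h : b ∉ Set.range e₂) : g₂ e₁ e₂ b = Sum.inr ⟨b, h⟩ := by
  unfold g₂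
  exact @dif_neg _ _ h _ _ _

lemma g₂_inl {b : B₂} {b' : B₁} (h : g₂ e₁ e₂ b = Sum.inl b') :
    ∃ a : A, e₂ a = b ∧ e₁ a = b' := by
  by_cases hb : b ∈ Set.range e₂
  · obtain ⟨a, rfl⟩ := hb
    refine ⟨a, rfl, ?_⟩
    rw [g₂_e₂] at h
    exact Sum.inl.inj h
  · rw [g₂_notMem e₁ e₂ hb] at h; simp at h

lemma g₂_injective : Function.Injective (g₂ e₁ e₂) := by
  intro b b' h
  by_cases hb : b ∈ Set.range e₂ <;> by_cases hb' : b' ∈ Set.range e₂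
  · obtain ⟨a, rfl⟩ := hb; obtain ⟨a', rfl⟩ := hb'
    rw [g₂_e₂, g₂_e₂] at h
    exact congrArg e₂ (e₁.injective (Sum.inl.inj h))
  · obtain ⟨a, rfl⟩ := hb
    rw [g₂_e₂, g₂_notMem e₁ e₂ hb'] at h
    simp at h
  · obtain ⟨a, rfl⟩ := hb'
    rw [g₂_e₂, g₂_notMem e₁ e₂ hb] at h
    simp at h
  · rw [g₂_notMem e₁ e₂ hb, g₂_notMem e₁ e₂ hb'] at h
    simpa using Sum.inr.inj h

noncomputable instance amalgamStructure [L.IsRelational] : L.Structure (Amalgam e₁ e₂) where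
  funMap := fun f _ => isEmptyElim f
  RelMap := fun {n} R t =>
    (∃ s : Fin n → B₁, Structure.RelMap R s ∧ Sum.inl ∘ s = t) ∨
    (∃ s : Fin n → B₂, Structure.RelMap R s ∧ g₂ e₁ e₂ ∘ s = t)


variable [L.IsRelational]

lemma relMap_inl {n} (R : L.Relations n) (s : Fin n → B₁) :
    Structure.RelMap (M := Amalgam e₁ e₂) R (Sum.inl ∘ s) ↔ Structure.RelMap R s := by
  constructor
  · rintro (⟨s', hs', he⟩ | ⟨s', hs', he⟩)
    · rwa [Sum.inl_injective.comp_left he] at hs'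
    · have hia : ∀ i, ∃ a : A, e₂ a = s' i ∧ e₁ a = s i := fun i =>
        g₂_inl e₁ e₂ (congrFun he i)
      choose a ha1 ha2 using hia
      have hs'eq : s' = e₂ ∘ a := funext fun i => (ha1 i).symm
      have hseq : s = e₁ ∘ a := funext fun i => (ha2 i).symm
      rw [hseq, e₁.map_rel]
      rw [hs'eq, e₂.map_rel] at hs'
      exact hs'
  · intro hs
    exact Or.inl ⟨s, hs, rfl⟩

lemma relMap_g₂ {n} (R : L.Relations n) (s : Fin n → B₂) :
    Structure.RelMap (M := Amalgam e₁ e₂) R (g₂ e₁ e₂ ∘ s) ↔ Structure.RelMap R s := by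
  constructor
  · rintro (⟨s', hs', he⟩ | ⟨s', hs', he⟩)
    · have hia : ∀ i, ∃ a : A, e₂ a = s i ∧ e₁ a = s' i := fun i =>
        g₂_inl e₁ e₂ (congrFun he i).symm
      choose a ha1 ha2 using hia
      have hs'eq : s' = e₁ ∘ a := funext fun i => (ha2 i).symm
      have hseq : s = e₂ ∘ a := funext fun i => (ha1 i).symm
      rw [hseq, e₂.map_rel]
      rw [hs'eq, e₁.map_rel] at hs'
      exact hs'
    · rwa [(g₂_injective e₁ e₂).comp_left he] at hs'
  · intro hs
    exact Or.inr ⟨s, hs, rfl⟩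

/-- The first embedding into the amalgam. -/
noncomputable def f₁Emb : B₁ ↪[L] Amalgam e₁ e₂ where
  toFun := Sum.inl
  inj' := Sum.inl_injective
  map_fun' := fun f _ => isEmptyElim f
  map_rel' := fun R x => relMap_inl e₁ e₂ R x

/-- The second embedding into the amalgam. -/
noncomputable def f₂Emb : B₂ ↪[L] Amalgam e₁ e₂ where
  toFun := g₂ e₁ e₂
  inj' := g₂_injective e₁ e₂
  map_fun' := fun f _ => isEmptyElim f
  map_rel' := fun R x => relMap_g₂ e₁ e₂ R x

lemma lift_concl {Bi : Type} [L.Structure Bi] [Nonempty Bi] (f : Bi → Amalgam e₁ e₂)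
    (hemb : ∀ (n : ℕ) (R : L.Relations n) (s : Fin n → Bi),
      Structure.RelMap (M := Amalgam e₁ e₂) R (f ∘ s) ↔ Structure.RelMap R s)
    (c : HornClause L ℕ) (hsat : ∀ v : ℕ → Bi, c.Realize v)
    (v : ℕ → Amalgam e₁ e₂) (hv : ∀ x, c.VarOccurs x → v x ∈ Set.range f)
    (hprem : ∀ a ∈ c.prem, a.Realize v) :
    c.concl.elim False (fun a => a.Realize v) := by
  classical
  set v' : ℕ → Bi := fun x =>
    if h : v x ∈ Set.range f then h.choose else Classical.arbitrary Bi with hv'def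
  have key : ∀ x, c.VarOccurs x → f (v' x) = v x := by
    intro x hx
    have h := hv x hx
    simp only [hv'def, dif_pos h]
    exact h.choose_spec
  have hprem' : ∀ a ∈ c.prem, a.Realize v' := by
    intro a ha
    have hr := hprem a ha
    unfold RelAtom.Realize at hr ⊢
    rw [← hemb a.n a.R (v' ∘ a.args)]
    have heq : f ∘ (v' ∘ a.args) = v ∘ a.args :=
      funext fun i => key _ (Or.inl ⟨a, ha, ⟨i, rfl⟩⟩)
    rwa [heq]
  have hres := hsat v' hprem'
  cases hc : c.concl with
  | none => rw [hc] at hres; exact hres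
  | some a₀ =>
    rw [hc] at hres
    simp only [Option.elim] at hres ⊢
    unfold RelAtom.Realize at hres ⊢
    have heq : v ∘ a₀.args = f ∘ (v' ∘ a₀.args) :=
      funext fun i =>
        (key _ (Or.inr ⟨a₀, Option.mem_def.mpr hc, ⟨i, rfl⟩⟩)).symm
    rw [heq]
    exact (hemb _ _ _).mpr hres

theorem amalgam_satisfies (Φ : List (HornClause L ℕ)) (hC : ∀ c ∈ Φ, c.Complete)
    (h1 : Satisfies Φ B₁) (h2 : Satisfies Φ B₂) : Satisfies Φ (Amalgam e₁ e₂) := by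
  intro c hc v hprem
  have hcover : ∀ x : Amalgam e₁ e₂,
      x ∈ Set.range (Sum.inl : B₁ → Amalgam e₁ e₂) ∨ x ∈ Set.range (g₂ e₁ e₂) := by
    rintro (b | ⟨b, hb⟩)
    · exact Or.inl ⟨b, rfl⟩
    · exact Or.inr ⟨b, g₂_notMem e₁ e₂ hb⟩
  have hdisj : (∀ x, c.VarOccurs x → v x ∈ Set.range (Sum.inl : B₁ → Amalgam e₁ e₂)) ∨
      (∀ x, c.VarOccurs x → v x ∈ Set.range (g₂ e₁ e₂)) := by
    by_contra hcon
    push_neg at hcon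
    obtain ⟨⟨x, hx, hx1⟩, ⟨y, hy, hy2⟩⟩ := hcon
    rcases eq_or_ne x y with rfl | hne
    · rcases hcover (v x) with h | h
      · exact hx1 h
      · exact hy2 h
    · obtain ⟨a, ha, ⟨i, hix⟩, ⟨j, hjy⟩⟩ := hC c hc x y hx hy hne
      have hr := hprem a ha
      unfold RelAtom.Realize at hr
      rcases hr with ⟨s, -, hs⟩ | ⟨s, -, hs⟩
      · exact hx1 (by rw [← hix]; exact ⟨s i, congrFun hs i⟩)
      · exact hy2 (by rw [← hjy]; exact ⟨s j, congrFun hs j⟩)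
  have hside : (∃ _ : Nonempty B₁,
        ∀ x, c.VarOccurs x → v x ∈ Set.range (Sum.inl : B₁ → Amalgam e₁ e₂)) ∨
      (∃ _ : Nonempty B₂, ∀ x, c.VarOccurs x → v x ∈ Set.range (g₂ e₁ e₂)) := by
    rcases hdisj with hP | hP
    · by_cases hne : Nonempty B₁
      · exact Or.inl ⟨hne, hP⟩
      · have hno : ∀ x, ¬ c.VarOccurs x := fun x hx => hne ⟨(hP x hx).choose⟩
        refine Or.inr ⟨?_, fun x hx => absurd hx (hno x)⟩
        rcases hcover (v 0) with ⟨b, -⟩ | ⟨b, -⟩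
        · exact absurd ⟨b⟩ hne
        · exact ⟨b⟩
    · by_cases hne : Nonempty B₂
      · exact Or.inr ⟨hne, hP⟩
      · have hno : ∀ x, ¬ c.VarOccurs x := fun x hx => hne ⟨(hP x hx).choose⟩
        refine Or.inl ⟨?_, fun x hx => absurd hx (hno x)⟩
        rcases hcover (v 0) with ⟨b, -⟩ | ⟨b, -⟩
        · exact ⟨b⟩
        · exact absurd ⟨b⟩ hne
  rcases hside with ⟨hne, hP⟩ | ⟨hne, hP⟩
  · haveI := hne
    exact lift_concl e₁ e₂ _ (fun n R s => relMap_inl e₁ e₂ R s) c (h1 c hc) v hP hprem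
  · haveI := hne
    exact lift_concl e₁ e₂ _ (fun n R s => relMap_g₂ e₁ e₂ R s) c (h2 c hc) v hP hprem

end Construction

theorem complete_horn_implies_freeAP
    [L.IsRelational] [Finite L.Symbols]
    (Φ : List (HornClause L ℕ)) (h : ∀ c ∈ Φ, c.Complete) :
    HasFreeAP (Models Φ) ∧ HasAP (Models Φ) := by
  have hfree : HasFreeAP (Models Φ) := by
    intro A B₁ B₂ e₁ e₂ hA hB₁ hB₂
    obtain ⟨hf1, hs1⟩ := hB₁
    obtain ⟨hf2, hs2⟩ := hB₂
    haveI : Finite ↥B₁ := hf1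
    haveI : Finite ↥B₂ := hf2
    have hcomm : (f₁Emb e₁ e₂).comp e₁ = (f₂Emb e₁ e₂).comp e₂ := by
      ext a
      show Sum.inl (e₁ a) = g₂ e₁ e₂ (e₂ a)
      exact (g₂_e₂ e₁ e₂ a).symm
    refine ⟨⟨Amalgam e₁ e₂, amalgamStructure e₁ e₂⟩, f₁Emb e₁ e₂, f₂Emb e₁ e₂,
      ⟨?_, ?_⟩, ?_, ?_, ?_, ?_⟩
    · exact inferInstanceAs (Finite (↥B₁ ⊕ {b : ↥B₂ // b ∉ Set.range e₂}))
    · exact amalgam_satisfies e₁ e₂ Φ h hs1 hs2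
    · exact hcomm
    · ext x
      constructor
      · rintro ⟨⟨b, rfl⟩, ⟨b₂, hb⟩⟩
        obtain ⟨a, -, ha⟩ := g₂_inl e₁ e₂ hb
        exact ⟨a, by simpa using ha⟩
      · rintro ⟨a, rfl⟩
        exact ⟨⟨e₁ a, by simp [f₁Emb, Embedding.comp_apply]⟩,
          ⟨e₂ a, by exact g₂_e₂ e₁ e₂ a⟩⟩
    · rw [hcomm]
    · exact fun n R t => Iff.rfl
  exact ⟨hfree, fun A B₁ B₂ e₁ e₂ hA hB₁ hB₂ => by
    obtain ⟨C, f₁, f₂, hC, hcomm, -⟩ := hfree A B₁ B₂ e₁ e₂ hA hB₁ hB₂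
    exact ⟨C, f₁, f₂, hC, hcomm⟩⟩

end AmalgamationHard
end

section
/- Let Φ be a universal Horn sentence over a finite relational signature τ. Then Models(Φ) has the amalgamation property if and only if Models(Φ) has the one-point amalgamation property. -/
open FirstOrder Language CategoryTheory

namespace AmalgamationHard

variable {L : FirstOrder.Language.{0, 0}}

/-- The strong amalgamation property for a class of structures. -/
def HasStrongAP (K : Set (Bundled.{0} L.Structure)) : Prop :=
  ∀ (A B₁ B₂ : Bundled.{0} L.Structure) (e₁ : A ↪[L] B₁) (e₂ : A ↪[L] B₂),
    A ∈ K → B₁ ∈ K → B₂ ∈ K →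
      ∃ (C : Bundled.{0} L.Structure) (f₁ : B₁ ↪[L] C) (f₂ : B₂ ↪[L] C),
        C ∈ K ∧ f₁.comp e₁ = f₂.comp e₂ ∧
        Set.range f₁ ∩ Set.range f₂ = Set.range (f₁.comp e₁) ∧
        Set.range (f₁.comp e₁) = Set.range (f₂.comp e₂)

/-- The one-point amalgamation property: the amalgamation property restricted to triples
`(A, B₁, B₂)` with `|B₁| = |B₂| = |A| + 1`. -/
def HasOnePointAP (K : Set (Bundled.{0} L.Structure)) : Prop :=
  ∀ (A B₁ B₂ : Bundled.{0} L.Structure) (e₁ : A ↪[L] B₁) (e₂ : A ↪[L] B₂),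
    A ∈ K → B₁ ∈ K → B₂ ∈ K →
    Nat.card B₁ = Nat.card A + 1 → Nat.card B₂ = Nat.card A + 1 →
      ∃ (C : Bundled.{0} L.Structure) (f₁ : B₁ ↪[L] C) (f₂ : B₂ ↪[L] C),
        C ∈ K ∧ f₁.comp e₁ = f₂.comp e₂

/-- The one-point strong amalgamation property: the strong amalgamation property restricted
to triples `(A, B₁, B₂)` with `|B₁| = |B₂| = |A| + 1`. -/
def HasOnePointStrongAP (K : Set (Bundled.{0} L.Structure)) : Prop :=
  ∀ (A B₁ B₂ : Bundled.{0} L.Structure) (e₁ : A ↪[L] B₁) (e₂ : A ↪[L] B₂),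
    A ∈ K → B₁ ∈ K → B₂ ∈ K →
    Nat.card B₁ = Nat.card A + 1 → Nat.card B₂ = Nat.card A + 1 →
      ∃ (C : Bundled.{0} L.Structure) (f₁ : B₁ ↪[L] C) (f₂ : B₂ ↪[L] C),
        C ∈ K ∧ f₁.comp e₁ = f₂.comp e₂ ∧
        Set.range f₁ ∩ Set.range f₂ = Set.range (f₁.comp e₁) ∧
        Set.range (f₁.comp e₁) = Set.range (f₂.comp e₂)

section Helpers

variable [L.IsRelational]

lemma emb_comp_apply_eq {M N P Q : Type} [L.Structure M] [L.Structure N] [L.Structure P]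
    [L.Structure Q] {g₁ : N ↪[L] Q} {e₁ : M ↪[L] N} {g₂ : P ↪[L] Q} {e₂ : M ↪[L] P}
    (h : g₁.comp e₁ = g₂.comp e₂) (a : M) : g₁ (e₁ a) = g₂ (e₂ a) := by
  have := congrFun (congrArg (DFunLike.coe) h) a
  simpa using this

lemma atom_realize_comp {V M N : Type} [L.Structure M] [L.Structure N]
    (f : M ↪[L] N) (a : RelAtom L V) (v : V → M) :
    a.Realize (⇑f ∘ v) ↔ a.Realize v := by
  unfold RelAtom.Realize
  exact f.map_rel _ _

lemma satisfies_of_embedding {M N : Type} [L.Structure M] [L.Structure N]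
    {Φ : List (HornClause L ℕ)} (f : M ↪[L] N) (h : Satisfies Φ N) : Satisfies Φ M := by
  intro c hc v hprem
  have h2 := h c hc (⇑f ∘ v) (fun a ha => (atom_realize_comp f a v).2 (hprem a ha))
  cases hc' : c.concl with
  | none => rw [hc'] at h2; exact h2
  | some a => rw [hc'] at h2; exact (atom_realize_comp f a v).1 h2

/-- The substructure on an arbitrary subset (any set is closed, as `L` is relational). -/
def subStruct (M : Bundled.{0} L.Structure) (S : Set M) : L.Substructure M :=
  ⟨S, fun f => isEmptyElim f⟩

def subBundled (M : Bundled.{0} L.Structure) (S : Set M) : Bundled.{0} L.Structure :=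
  ⟨↥(subStruct M S), inferInstance⟩

lemma subBundled_mem {Φ : List (HornClause L ℕ)} (M : Bundled.{0} L.Structure) (S : Set M)
    (hM : M ∈ Models Φ) : subBundled M S ∈ Models Φ := by
  have : Finite M := hM.1
  exact ⟨Subtype.finite, satisfies_of_embedding (Substructure.subtype _) hM.2⟩

/-- Pull back the relational structure of `C` along a map `p : T → C`. -/
def pullbackStructure {T C : Type} [L.Structure C] (p : T → C) : L.Structure T where
  funMap := fun f _ => isEmptyElim f
  RelMap := fun r x => Structure.RelMap r (p ∘ x)

lemma card_lt_of_not_surj {A B : Bundled.{0} L.Structure} (e : A ↪[L] B)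
    (hB : Finite B) (hns : ¬ Function.Surjective e) :
    Nat.card A < Nat.card B := by
  unfold Function.Surjective at hns
  push_neg at hns
  obtain ⟨b, hb⟩ := hns
  have hsub : Set.range ⇑e ⊂ Set.univ := by
    refine ⟨Set.subset_univ _, fun hsup => ?_⟩
    obtain ⟨a, ha⟩ := hsup (Set.mem_univ b)
    exact hb a ha
  have h1 : Nat.card A = (Set.range ⇑e).ncard := by
    rw [← Nat.card_coe_set_eq, Nat.card_range_of_injective e.injective]
  have h2 := Set.ncard_lt_ncard hsub (Set.finite_univ)
  rwa [Set.ncard_univ, ← h1] at h2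

lemma surjInv {A B : Bundled.{0} L.Structure} (e : A ↪[L] B) (hs : Function.Surjective e) :
    ∃ g : B ↪[L] A, ∀ a, g (e a) = a := by
  have hbij : Function.Bijective e := ⟨e.injective, hs⟩
  let q := Equiv.ofBijective _ hbij
  refine ⟨{ toFun := q.symm, inj' := q.symm.injective,
            map_fun' := fun f _ => isEmptyElim f,
            map_rel' := ?_ }, fun a => q.symm_apply_apply a⟩
  intro n r x
  have hx : ⇑e ∘ (⇑q.symm ∘ x) = x := funext fun i => q.apply_symm_apply (x i)
  have h2 := e.map_rel r (⇑q.symm ∘ x)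
  rw [show ⇑e ∘ (⇑q.symm ∘ x) = x from hx] at h2
  exact h2.symm

variable {Φ : List (HornClause L ℕ)}

lemma trivAmalg₂ {A B₁ B₂ : Bundled.{0} L.Structure} (e₁ : A ↪[L] B₁) (e₂ : A ↪[L] B₂)
    (hs : Function.Surjective e₂) (hB₁ : B₁ ∈ Models Φ) :
    ∃ (C : Bundled.{0} L.Structure) (f₁ : B₁ ↪[L] C) (f₂ : B₂ ↪[L] C),
      C ∈ Models Φ ∧ f₁.comp e₁ = f₂.comp e₂ := by
  obtain ⟨g, hg⟩ := surjInv e₂ hs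
  refine ⟨B₁, Embedding.refl L B₁, e₁.comp g, hB₁, ?_⟩
  ext a
  simp [hg a]

lemma trivAmalg₁ {A B₁ B₂ : Bundled.{0} L.Structure} (e₁ : A ↪[L] B₁) (e₂ : A ↪[L] B₂)
    (hs : Function.Surjective e₁) (hB₂ : B₂ ∈ Models Φ) :
    ∃ (C : Bundled.{0} L.Structure) (f₁ : B₁ ↪[L] C) (f₂ : B₂ ↪[L] C),
      C ∈ Models Φ ∧ f₁.comp e₁ = f₂.comp e₂ := by
  obtain ⟨g, hg⟩ := surjInv e₁ hs
  refine ⟨B₂, e₂.comp g, Embedding.refl L B₂, hB₂, ?_⟩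
  ext a
  simp [hg a]

lemma pushout {A B₁ B₂ C : Bundled.{0} L.Structure}
    (e₁ : A ↪[L] B₁) (e₂ : A ↪[L] B₂) (g₁ : B₁ ↪[L] C) (g₂ : B₂ ↪[L] C)
    (hcomm : g₁.comp e₁ = g₂.comp e₂)
    (hC : Satisfies Φ C) (hB₁ : Finite B₁) (hB₂ : Finite B₂) (hA : Finite A) :
    ∃ (C' : Bundled.{0} L.Structure) (f₁ : B₁ ↪[L] C') (f₂ : B₂ ↪[L] C'),
      C' ∈ Models Φ ∧ f₁.comp e₁ = f₂.comp e₂ ∧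
      Nat.card C' + Nat.card A = Nat.card B₁ + Nat.card B₂ := by
  classical
  have hcomm' : ∀ a, g₁ (e₁ a) = g₂ (e₂ a) := fun a => emb_comp_apply_eq hcomm a
  let T : Type := B₁ ⊕ {b : B₂ // b ∉ Set.range ⇑e₂}
  let p : T → C := Sum.elim (⇑g₁) (fun b => g₂ b.1)
  letI st : L.Structure T := pullbackStructure p
  let f₁ : B₁ ↪[L] T :=
    { toFun := Sum.inl
      inj' := Sum.inl_injective
      map_fun' := fun f _ => isEmptyElim f
      map_rel' := fun r x => g₁.map_rel r x }
  let F₂ : B₂ → T := fun b =>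
    if h : b ∈ Set.range ⇑e₂ then Sum.inl (e₁ h.choose) else Sum.inr ⟨b, h⟩
  have hpF₂ : ∀ b, p (F₂ b) = g₂ b := by
    intro b
    by_cases h : b ∈ Set.range ⇑e₂
    · simp only [F₂, dif_pos h]
      show g₁ (e₁ h.choose) = g₂ b
      rw [hcomm' h.choose, h.choose_spec]
    · simp only [F₂, dif_neg h]
      rfl
  have hF₂inj : Function.Injective F₂ := by
    intro b b' h
    apply g₂.injective
    rw [← hpF₂ b, ← hpF₂ b', h]
  let f₂ : B₂ ↪[L] T :=
    { toFun := F₂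
      inj' := hF₂inj
      map_fun' := fun f _ => isEmptyElim f
      map_rel' := by
        intro n r x
        have hpx : p ∘ (F₂ ∘ x) = ⇑g₂ ∘ x := funext fun i => hpF₂ (x i)
        show Structure.RelMap r (p ∘ (F₂ ∘ x)) ↔ _
        rw [hpx]
        exact g₂.map_rel r x }
  have hcomm2 : f₁.comp e₁ = f₂.comp e₂ := by
    ext a
    show Sum.inl (e₁ a) = F₂ (e₂ a)
    have h : e₂ a ∈ Set.range ⇑e₂ := ⟨a, rfl⟩
    simp only [F₂, dif_pos h]
    rw [e₂.injective h.choose_spec]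
  have hfin : Finite T := by
    have : Finite {b : B₂ // b ∉ Set.range ⇑e₂} := Subtype.finite
    exact Finite.instSum
  refine ⟨⟨T, st⟩, f₁, f₂, ⟨hfin, ?_⟩, hcomm2, ?_⟩
  · intro c hc v hprem
    have h2 := hC c hc (p ∘ v) (fun a ha => hprem a ha)
    cases hc' : c.concl with
    | none => rw [hc'] at h2; exact h2
    | some a => rw [hc'] at h2; exact h2
  · show Nat.card T + Nat.card A = Nat.card B₁ + Nat.card B₂
    have h1 : Nat.card T = Nat.card B₁ + Nat.card {b : B₂ // b ∉ Set.range ⇑e₂} :=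
      Nat.card_sum
    have h2 : Nat.card {b : B₂ // b ∉ Set.range ⇑e₂} = ((Set.range ⇑e₂)ᶜ).ncard := by
      rw [← Nat.card_coe_set_eq]
      rfl
    have h3 : (Set.range ⇑e₂).ncard + ((Set.range ⇑e₂)ᶜ).ncard = Nat.card B₂ :=
      Set.ncard_add_ncard_compl _
    have h4 : (Set.range ⇑e₂).ncard = Nat.card A := by
      rw [← Nat.card_coe_set_eq, Nat.card_range_of_injective e₂.injective]
    omega

end Helpers

section Claims

variable [L.IsRelational]

lemma claim1 (Φ : List (HornClause L ℕ)) (h1 : HasOnePointAP (Models Φ)) :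
    ∀ m : ℕ, ∀ (A B₁ B₂ : Bundled.{0} L.Structure) (e₁ : A ↪[L] B₁) (e₂ : A ↪[L] B₂),
      A ∈ Models Φ → B₁ ∈ Models Φ → B₂ ∈ Models Φ →
      Nat.card B₁ ≤ Nat.card A + 1 → Nat.card B₂ ≤ Nat.card A + m →
      ∃ (C : Bundled.{0} L.Structure) (f₁ : B₁ ↪[L] C) (f₂ : B₂ ↪[L] C),
        C ∈ Models Φ ∧ f₁.comp e₁ = f₂.comp e₂ := by
  intro m
  induction m with
  | zero =>
    intro A B₁ B₂ e₁ e₂ hA hB₁ hB₂ hc₁ hc₂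
    by_cases hs : Function.Surjective ⇑e₂
    · exact trivAmalg₂ e₁ e₂ hs hB₁
    · have := card_lt_of_not_surj e₂ hB₂.1 hs
      omega
  | succ m ih =>
    intro A B₁ B₂ e₁ e₂ hA hB₁ hB₂ hc₁ hc₂
    by_cases hs₂ : Function.Surjective ⇑e₂
    · exact trivAmalg₂ e₁ e₂ hs₂ hB₁
    by_cases hs₁ : Function.Surjective ⇑e₁
    · exact trivAmalg₁ e₁ e₂ hs₁ hB₂
    have hAfin : Finite A := hA.1
    have hB₁fin : Finite B₁ := hB₁.1
    have hB₂fin : Finite B₂ := hB₂.1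
    have hcard₁ : Nat.card B₁ = Nat.card A + 1 := by
      have := card_lt_of_not_surj e₁ hB₁fin hs₁
      omega
    -- pick a point outside the range of e₂
    have hb : ∃ b : B₂, b ∉ Set.range ⇑e₂ := by
      unfold Function.Surjective at hs₂
      push_neg at hs₂
      obtain ⟨b, hb⟩ := hs₂
      exact ⟨b, fun ⟨a, ha⟩ => hb a ha⟩
    obtain ⟨b, hb⟩ := hb
    set S : Set B₂ := insert b (Set.range ⇑e₂) with hS
    let A₂ : Bundled.{0} L.Structure := subBundled B₂ S
    have hA₂mem : A₂ ∈ Models Φ := subBundled_mem B₂ S hB₂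
    let i : A₂ ↪[L] B₂ := Substructure.subtype (subStruct B₂ S)
    have hmem : ∀ a : A, e₂ a ∈ subStruct B₂ S := fun a =>
      Set.mem_insert_of_mem _ ⟨a, rfl⟩
    let e₂' : A ↪[L] A₂ := FirstOrder.Language.Embedding.codRestrict (subStruct B₂ S) e₂ hmem
    have hie : ∀ a : A, i (e₂' a) = e₂ a := fun a => rfl
    have hcardA₂ : Nat.card A₂ = Nat.card A + 1 := by
      have h2 : (Set.range ⇑e₂).ncard = Nat.card A := by
        rw [← Nat.card_coe_set_eq, Nat.card_range_of_injective e₂.injective]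
      have h1 : Nat.card A₂ = S.ncard := Nat.card_coe_set_eq _
      rw [h1, hS, Set.ncard_insert_of_notMem hb (Set.toFinite _), h2]
    -- one-point amalgamation of B₁ and A₂ over A
    obtain ⟨C, g₁, g₂, hCmem, hgcomm⟩ :=
      h1 A B₁ A₂ e₁ e₂' hA hB₁ hA₂mem hcard₁ hcardA₂
    have hA₂fin : Finite A₂ := hA₂mem.1
    -- take the pushout to get a one-point extension of A₂
    obtain ⟨D, f₁', f₂', hDmem, hDcomm, hDcard⟩ :=
      pushout e₁ e₂' g₁ g₂ hgcomm hCmem.2 hB₁fin hA₂fin hAfin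
    -- amalgamate D and B₂ over A₂ by induction
    obtain ⟨E, k₁, k₂, hEmem, hEcomm⟩ :=
      ih A₂ D B₂ f₂' i hA₂mem hDmem hB₂ (by omega) (by omega)
    refine ⟨E, k₁.comp f₁', k₂, hEmem, ?_⟩
    ext a
    show k₁ (f₁' (e₁ a)) = k₂ (e₂ a)
    rw [emb_comp_apply_eq hDcomm a, emb_comp_apply_eq hEcomm (e₂' a), hie a]

lemma claim2 (Φ : List (HornClause L ℕ)) (h1 : HasOnePointAP (Models Φ)) :
    ∀ k : ℕ, ∀ (A B₁ B₂ : Bundled.{0} L.Structure) (e₁ : A ↪[L] B₁) (e₂ : A ↪[L] B₂),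
      A ∈ Models Φ → B₁ ∈ Models Φ → B₂ ∈ Models Φ →
      Nat.card B₁ ≤ Nat.card A + k →
      ∃ (C : Bundled.{0} L.Structure) (f₁ : B₁ ↪[L] C) (f₂ : B₂ ↪[L] C),
        C ∈ Models Φ ∧ f₁.comp e₁ = f₂.comp e₂ := by
  intro k
  induction k with
  | zero =>
    intro A B₁ B₂ e₁ e₂ hA hB₁ hB₂ hc₁
    by_cases hs : Function.Surjective ⇑e₁
    · exact trivAmalg₁ e₁ e₂ hs hB₂
    · have := card_lt_of_not_surj e₁ hB₁.1 hs
      omega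
  | succ k ih =>
    intro A B₁ B₂ e₁ e₂ hA hB₁ hB₂ hc₁
    by_cases hs₁ : Function.Surjective ⇑e₁
    · exact trivAmalg₁ e₁ e₂ hs₁ hB₂
    have hB₁fin : Finite B₁ := hB₁.1
    have hb : ∃ b : B₁, b ∉ Set.range ⇑e₁ := by
      unfold Function.Surjective at hs₁
      push_neg at hs₁
      obtain ⟨b, hbb⟩ := hs₁
      exact ⟨b, fun ⟨a, ha⟩ => hbb a ha⟩
    obtain ⟨b, hb⟩ := hb
    set S : Set B₁ := insert b (Set.range ⇑e₁) with hS
    let A₁ : Bundled.{0} L.Structure := subBundled B₁ S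
    have hA₁mem : A₁ ∈ Models Φ := subBundled_mem B₁ S hB₁
    let i : A₁ ↪[L] B₁ := Substructure.subtype (subStruct B₁ S)
    have hmem : ∀ a : A, e₁ a ∈ subStruct B₁ S := fun a =>
      Set.mem_insert_of_mem _ ⟨a, rfl⟩
    let e₁' : A ↪[L] A₁ := FirstOrder.Language.Embedding.codRestrict (subStruct B₁ S) e₁ hmem
    have hie : ∀ a : A, i (e₁' a) = e₁ a := fun a => rfl
    have hcardA₁ : Nat.card A₁ = Nat.card A + 1 := by
      have h2 : (Set.range ⇑e₁).ncard = Nat.card A := by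
        rw [← Nat.card_coe_set_eq, Nat.card_range_of_injective e₁.injective]
      have h1 : Nat.card A₁ = S.ncard := Nat.card_coe_set_eq _
      rw [h1, hS, Set.ncard_insert_of_notMem hb (Set.toFinite _), h2]
    -- amalgamate A₁ and B₂ over A using claim1
    obtain ⟨D, g₁, g₂, hDmem, hgcomm⟩ :=
      claim1 Φ h1 (Nat.card B₂) A A₁ B₂ e₁' e₂ hA hA₁mem hB₂ (by omega)
        (Nat.le_add_left _ _)
    -- amalgamate B₁ and D over A₁ by induction
    obtain ⟨E, k₁, k₂, hEmem, hEcomm⟩ :=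
      ih A₁ B₁ D i g₁ hA₁mem hB₁ hDmem (by omega)
    refine ⟨E, k₁, k₂.comp g₂, hEmem, ?_⟩
    ext a
    show k₁ (e₁ a) = k₂ (g₂ (e₂ a))
    rw [← hie a, emb_comp_apply_eq hEcomm (e₁' a), ← emb_comp_apply_eq hgcomm a]

end Claims

theorem ap_iff_onePointAP [L.IsRelational] [Finite L.Symbols]
    (Φ : List (HornClause L ℕ)) :
    HasAP (Models Φ) ↔ HasOnePointAP (Models Φ) := by
  constructor
  · intro h A B₁ B₂ e₁ e₂ hA hB₁ hB₂ _ _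
    exact h A B₁ B₂ e₁ e₂ hA hB₁ hB₂
  · intro h1 A B₁ B₂ e₁ e₂ hA hB₁ hB₂
    exact claim2 Φ h1 (Nat.card B₁) A B₁ B₂ e₁ e₂ hA hB₁ hB₂ (Nat.le_add_left _ _)

end AmalgamationHard
end

section
/- Let Φ be a universal Horn sentence over a finite relational signature τ (equality atoms are not permitted in Φ). Then Models(Φ) has the amalgamation property if and only if Models(Φ) has the strong amalgamation property. -/
open FirstOrder Language CategoryTheory

namespace AmalgamationHard

variable {L : FirstOrder.Language.{0, 0}}

theorem ap_iff_strongAP [L.IsRelational] [Finite L.Symbols]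
    (Φ : List (HornClause L ℕ)) :
    HasAP (Models Φ) ↔ HasStrongAP (Models Φ) := by
  constructor
  · intro hap A B₁ B₂ e₁ e₂ hA hB₁ hB₂
    obtain ⟨C, f₁, f₂, hC, hcomp⟩ := hap A B₁ B₂ e₁ e₂ hA hB₁ hB₂
    classical
    letI inst : L.Structure (C × Fin 3) :=
      { funMap := fun f _ => isEmptyElim f
        RelMap := fun R x => Structure.RelMap R (fun i => (x i).1) }
    have hfeq : ∀ a : A, f₁ (e₁ a) = f₂ (e₂ a) := by
      intro a
      have := DFunLike.congr_fun hcomp a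
      simpa using this
    let g₁ : B₁ ↪[L] (C × Fin 3) :=
      { toFun := fun b => (f₁ b, if b ∈ Set.range e₁ then 0 else 1)
        inj' := fun x y hxy => f₁.injective (congrArg Prod.fst hxy)
        map_fun' := fun f _ => isEmptyElim f
        map_rel' := fun r x => f₁.map_rel r x }
    let g₂ : B₂ ↪[L] (C × Fin 3) :=
      { toFun := fun b => (f₂ b, if b ∈ Set.range e₂ then 0 else 2)
        inj' := fun x y hxy => f₂.injective (congrArg Prod.fst hxy)
        map_fun' := fun f _ => isEmptyElim f
        map_rel' := fun r x => f₂.map_rel r x }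
    have key : ∀ a : A, g₁ (e₁ a) = (f₁ (e₁ a), 0) ∧ g₂ (e₂ a) = (f₁ (e₁ a), 0) := by
      intro a
      constructor
      · show (f₁ (e₁ a), if e₁ a ∈ Set.range e₁ then (0 : Fin 3) else 1) = _
        rw [if_pos ⟨a, rfl⟩]
      · show (f₂ (e₂ a), if e₂ a ∈ Set.range e₂ then (0 : Fin 3) else 2) = _
        rw [if_pos ⟨a, rfl⟩, hfeq a]
    have hcomp' : g₁.comp e₁ = g₂.comp e₂ := by
      apply DFunLike.ext
      intro a
      simp only [Embedding.comp_apply]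
      rw [(key a).1, (key a).2]
    haveI : Finite C := hC.1
    refine ⟨⟨C × Fin 3, inst⟩, g₁, g₂, ⟨Finite.instProd, ?_⟩, hcomp', ?_, ?_⟩
    · intro c hc v
      exact hC.2 c hc (fun n => (v n).1)
    · ext ⟨c, i⟩
      constructor
      · rintro ⟨⟨b₁, hb₁⟩, ⟨b₂, hb₂⟩⟩
        have hi₁ : (if b₁ ∈ Set.range e₁ then (0 : Fin 3) else 1) = i :=
          congrArg Prod.snd hb₁
        have hi₂ : (if b₂ ∈ Set.range e₂ then (0 : Fin 3) else 2) = i :=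
          congrArg Prod.snd hb₂
        by_cases h1 : b₁ ∈ Set.range e₁
        · obtain ⟨a, rfl⟩ := h1
          exact ⟨a, by simp only [Embedding.comp_apply]; rw [(key a).1, ← hb₁, (key a).1]⟩
        · exfalso
          rw [if_neg h1] at hi₁
          by_cases h2 : b₂ ∈ Set.range e₂
          · rw [if_pos h2] at hi₂; rw [← hi₁] at hi₂; exact absurd hi₂ (by decide)
          · rw [if_neg h2] at hi₂; rw [← hi₁] at hi₂; exact absurd hi₂ (by decide)
      · rintro ⟨a, ha⟩
        simp only [Embedding.comp_apply] at ha
        exact ⟨⟨e₁ a, ha⟩, ⟨e₂ a, by rw [(key a).2, ← (key a).1, ha]⟩⟩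
    · ext x
      constructor
      · rintro ⟨a, rfl⟩
        exact ⟨a, by simp only [Embedding.comp_apply]; rw [(key a).2, (key a).1]⟩
      · rintro ⟨a, rfl⟩
        exact ⟨a, by simp only [Embedding.comp_apply]; rw [(key a).1, (key a).2]⟩
  · intro hs A B₁ B₂ e₁ e₂ hA hB₁ hB₂
    obtain ⟨C, f₁, f₂, hC, hcomp, -⟩ := hs A B₁ B₂ e₁ e₂ hA hB₁ hB₂
    exact ⟨C, f₁, f₂, hC, hcomp⟩

end AmalgamationHard
end

section
/- Let Φ be a universal Horn sentence over a finite relational signature τ. If Models(Φ) has the one-point amalgamation property, then for all conjunctions of atomic τ-formulas φ(x̄), φ₁(x̄,y₁), φ₂(x̄,y₂) such that φ(x̄) ∧ φ_i(x̄,y_i) ⊑_Φ φ(x̄) for i ∈ {1,2}, it holds that φ(x̄) ∧ φ₁(x̄,y₁) ∧ φ₂(x̄,y₂) ⊑_Φ φ(x̄) ∧ φ₁(x̄,y₁). -/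
open FirstOrder Language CategoryTheory

namespace AmalgamationHard

variable {L : FirstOrder.Language.{0, 0}}

/-- `Entails Φ prem concl` : the universal Horn sentence `Φ` semantically entails the
universally quantified Horn clause with premise `prem` and conclusion `concl`
(`none` codes `⊥`), i.e. every structure satisfying `Φ` satisfies the clause. -/
def Entails (Φ : List (HornClause L ℕ)) {V : Type}
    (prem : List (RelAtom L V)) (concl : Option (RelAtom L V)) : Prop :=
  ∀ (M : Type) [L.Structure M], Satisfies Φ M → ∀ v : V → M,
    (∀ a ∈ prem, a.Realize v) → concl.elim False (fun a => a.Realize v)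

/-- `Subsumes Φ ψ φ` : the conjunction `φ(x̄)` of atoms (with variables from `X`) subsumes
the conjunction `ψ(x̄, ȳ)` of atoms (with variables from `X ⊕ Y`) with respect to `Φ`,
written `ψ(x̄,ȳ) ⊑_Φ φ(x̄)`: for every `χ` that is `⊥` or an atom with variables among `x̄`,
if `Φ ⊨ ∀x̄ȳ (ψ ⇒ χ)` then `Φ ⊨ ∀x̄ (φ ⇒ χ)`. -/
def Subsumes (Φ : List (HornClause L ℕ)) {X Y : Type}
    (ψ : List (RelAtom L (X ⊕ Y))) (φ : List (RelAtom L X)) : Prop :=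
  ∀ χ : Option (RelAtom L X),
    Entails Φ ψ (χ.map (RelAtom.map Sum.inl)) → Entails Φ φ χ

/-- The subsumption condition of Lemma 1(3): for all conjunctions of atoms `φ(x̄)`,
`φ₁(x̄,y₁)`, `φ₂(x̄,y₂)` with `φ ∧ φᵢ ⊑_Φ φ` for `i ∈ {1,2}`, one has
`φ ∧ φ₁ ∧ φ₂ ⊑_Φ φ ∧ φ₁`. Here `y₁` and `y₂` are single fresh variables, coded by
`Sum.inr ()`. -/
def SubsumptionCondition (Φ : List (HornClause L ℕ)) : Prop :=
  ∀ (m : ℕ) (φ : List (RelAtom L (Fin m))) (φ₁ φ₂ : List (RelAtom L (Fin m ⊕ Unit))),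
    Subsumes Φ (φ.map (RelAtom.map Sum.inl) ++ φ₁) φ →
    Subsumes Φ (φ.map (RelAtom.map Sum.inl) ++ φ₂) φ →
    Subsumes Φ (Y := Unit)
      (φ.map (RelAtom.map (Sum.inl ∘ Sum.inl)) ++ φ₁.map (RelAtom.map Sum.inl)
        ++ φ₂.map (RelAtom.map (Sum.map Sum.inl id)))
      (φ.map (RelAtom.map Sum.inl) ++ φ₁)

section Aux

variable [L.IsRelational] (Φ : List (HornClause L ℕ))

/-- The canonical (free) structure of a conjunction of atoms `ψ` over variable set `V`:
a relation holds of a tuple iff `Φ` entails the corresponding atom from `ψ`. -/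
def canonStruct {V : Type} (ψ : List (RelAtom L V)) : L.Structure V where
  funMap := fun {_} f _ => isEmptyElim f
  RelMap := fun {n} R t => Entails Φ ψ (some ⟨n, R, t⟩)

theorem canon_realize_iff {V : Type} (ψ : List (RelAtom L V)) (a : RelAtom L V) :
    @RelAtom.Realize L V V (canonStruct Φ ψ) a id ↔ Entails Φ ψ (some a) := by
  cases a
  simp only [RelAtom.Realize, canonStruct, Function.id_comp]
  exact Iff.rfl

theorem entails_mem {V : Type} (ψ : List (RelAtom L V)) {a : RelAtom L V} (ha : a ∈ ψ) :
    Entails Φ ψ (some a) := fun _ _ _ v hv => hv a ha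

theorem entails_mono_map {V W : Type} (ι : V → W) (ψ : List (RelAtom L V))
    (ψ' : List (RelAtom L W)) (hsub : ∀ a ∈ ψ, a.map ι ∈ ψ')
    (χ : Option (RelAtom L V)) (h : Entails Φ ψ χ) :
    Entails Φ ψ' (χ.map (RelAtom.map ι)) := by
  intro M _ hM u hu
  have := h M hM (u ∘ ι) (fun a ha => hu (a.map ι) (hsub a ha))
  cases χ with
  | none => exact this
  | some b => exact this

theorem not_entails_none_exists {V : Type} (ψ : List (RelAtom L V))
    (h : ¬ Entails Φ ψ none) :
    ∃ (M : Type) (_ : L.Structure M), Satisfies Φ M ∧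
      ∃ u : V → M, ∀ a ∈ ψ, a.Realize u := by
  by_contra h'
  exact h (fun M inst hM u hu => h' ⟨M, inst, hM, u, hu⟩)

theorem canon_satisfies {V : Type} (ψ : List (RelAtom L V)) (hcon : ¬ Entails Φ ψ none) :
    @Satisfies L Φ V (canonStruct Φ ψ) := by
  intro c hc v hprem
  have hprem' : ∀ a ∈ c.prem, Entails Φ ψ (some (a.map v)) := fun a ha => hprem a ha
  rcases hcc : c.concl with _ | b
  · exfalso
    obtain ⟨M, inst, hM, u, hu⟩ := not_entails_none_exists Φ ψ hcon
    have := hM c hc (u ∘ v)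
    rw [HornClause.Realize, hcc] at this
    exact this (fun a ha => hprem' a ha M hM u hu)
  · show @RelAtom.Realize L ℕ V (canonStruct Φ ψ) b v
    show Entails Φ ψ (some (b.map v))
    intro M inst hM u hu
    have := hM c hc (u ∘ v)
    rw [HornClause.Realize, hcc] at this
    exact this (fun a ha => hprem' a ha M hM u hu)

/-- The canonical embedding between canonical structures induced by a variable renaming. -/
def canonEmb {V W : Type} (ψ : List (RelAtom L V)) (ψ' : List (RelAtom L W))
    (ι : V → W) (hι : Function.Injective ι)
    (h1 : ∀ a : RelAtom L V, Entails Φ ψ (some a) → Entails Φ ψ' (some (a.map ι)))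
    (h2 : ∀ a : RelAtom L V, Entails Φ ψ' (some (a.map ι)) → Entails Φ ψ (some a)) :
    @Embedding L V W (canonStruct Φ ψ) (canonStruct Φ ψ') :=
  letI := canonStruct Φ ψ
  letI := canonStruct Φ ψ'
  { toFun := ι
    inj' := hι
    map_fun' := fun {_} f _ => isEmptyElim f
    map_rel' := fun {n} R t => ⟨h2 ⟨n, R, t⟩, h1 ⟨n, R, t⟩⟩ }

end Aux

theorem onePointAP_implies_subsumption [L.IsRelational] [Finite L.Symbols]
    (Φ : List (HornClause L ℕ)) (h : HasOnePointAP (Models Φ)) :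
    SubsumptionCondition Φ := by
  intro m φ φ₁ φ₂ hs1 hs2 χ hχ
  set ψ₁ : List (RelAtom L (Fin m ⊕ Unit)) := φ.map (RelAtom.map Sum.inl) ++ φ₁ with hψ₁
  set ψ₂ : List (RelAtom L (Fin m ⊕ Unit)) := φ.map (RelAtom.map Sum.inl) ++ φ₂ with hψ₂
  by_cases hcon : Entails Φ ψ₁ none
  · intro M inst hM v hv
    exact (hcon M hM v hv).elim
  -- consistency of φ and of ψ₂
  have hsub1 : ∀ a ∈ φ, a.map Sum.inl ∈ ψ₁ := fun a ha =>
    List.mem_append_left _ (List.mem_map_of_mem ha)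
  have hsub2 : ∀ a ∈ φ, a.map Sum.inl ∈ ψ₂ := fun a ha =>
    List.mem_append_left _ (List.mem_map_of_mem ha)
  have hconφ : ¬ Entails Φ φ none := fun hn =>
    hcon (entails_mono_map Φ Sum.inl φ ψ₁ hsub1 none hn)
  have hcon2 : ¬ Entails Φ ψ₂ none := fun hn => hconφ (hs2 none hn)
  -- bundled canonical structures
  let A : Bundled.{0} L.Structure := ⟨Fin m, canonStruct Φ φ⟩
  let B₁ : Bundled.{0} L.Structure := ⟨Fin m ⊕ Unit, canonStruct Φ ψ₁⟩
  let B₂ : Bundled.{0} L.Structure := ⟨Fin m ⊕ Unit, canonStruct Φ ψ₂⟩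
  obtain ⟨C, f₁, f₂, ⟨hCfin, hCsat⟩, hcomm⟩ :=
    h A B₁ B₂
      (canonEmb Φ φ ψ₁ Sum.inl Sum.inl_injective
        (fun a ha => entails_mono_map Φ Sum.inl φ ψ₁ hsub1 (some a) ha)
        (fun a ha => hs1 (some a) ha))
      (canonEmb Φ φ ψ₂ Sum.inl Sum.inl_injective
        (fun a ha => entails_mono_map Φ Sum.inl φ ψ₂ hsub2 (some a) ha)
        (fun a ha => hs2 (some a) ha))
      ⟨inferInstanceAs (Finite (Fin m)), canon_satisfies Φ φ hconφ⟩
      ⟨inferInstanceAs (Finite (Fin m ⊕ Unit)), canon_satisfies Φ ψ₁ hcon⟩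
      ⟨inferInstanceAs (Finite (Fin m ⊕ Unit)), canon_satisfies Φ ψ₂ hcon2⟩
      (by simp [A, B₁, Nat.card_eq_fintype_card])
      (by simp [A, B₂, Nat.card_eq_fintype_card])
  have hcomm' : ∀ x : Fin m, f₁ (Sum.inl x) = f₂ (Sum.inl x) := fun x =>
    congrArg (fun g => DFunLike.coe g x) hcomm
  -- the amalgamated assignment
  set w : (Fin m ⊕ Unit) ⊕ Unit → C :=
    Sum.elim (⇑f₁) (fun _ => f₂ (Sum.inr ())) with hw
  have hw2 : ∀ z : Fin m ⊕ Unit, w (Sum.map Sum.inl id z) = f₂ z := by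
    rintro (x | ⟨⟩)
    · exact hcomm' x
    · rfl
  -- realize all atoms of B₁ in B₁ at the identity, and push to C
  have hB1 : ∀ a ∈ ψ₁, Entails Φ ψ₁ (some a) := fun a ha => entails_mem Φ ψ₁ ha
  have hB2 : ∀ a ∈ ψ₂, Entails Φ ψ₂ (some a) := fun a ha => entails_mem Φ ψ₂ ha
  have hf₁ : ∀ a : RelAtom L (Fin m ⊕ Unit), Entails Φ ψ₁ (some a) →
      a.Realize (⇑f₁) := by
    intro a ha
    have : @RelAtom.Realize L _ _ (canonStruct Φ ψ₁) a id := (canon_realize_iff Φ ψ₁ a).mpr ha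
    exact (@Embedding.map_rel L _ _ (canonStruct Φ ψ₁) C.str f₁ _ a.R a.args).mpr this
  have hf₂ : ∀ a : RelAtom L (Fin m ⊕ Unit), Entails Φ ψ₂ (some a) →
      a.Realize (⇑f₂) := by
    intro a ha
    have : @RelAtom.Realize L _ _ (canonStruct Φ ψ₂) a id := (canon_realize_iff Φ ψ₂ a).mpr ha
    exact (@Embedding.map_rel L _ _ (canonStruct Φ ψ₂) C.str f₂ _ a.R a.args).mpr this
  -- the big premise is realized in C at w
  have hbig : ∀ a ∈ (φ.map (RelAtom.map (Sum.inl ∘ Sum.inl)) ++ φ₁.map (RelAtom.map Sum.inl)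
      ++ φ₂.map (RelAtom.map (Sum.map Sum.inl id))), a.Realize w := by
    intro a ha
    rcases List.mem_append.mp ha with ha' | ha'
    · rcases List.mem_append.mp ha' with ha'' | ha''
      · obtain ⟨b, hb, rfl⟩ := List.mem_map.mp ha''
        have : (b.map Sum.inl).Realize (⇑f₁) :=
          hf₁ _ (hB1 _ (hsub1 b hb))
        exact this
      · obtain ⟨b, hb, rfl⟩ := List.mem_map.mp ha''
        have : b.Realize (⇑f₁) := hf₁ _ (hB1 _ (List.mem_append_right _ hb))
        exact this
    · obtain ⟨b, hb, rfl⟩ := List.mem_map.mp ha'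
      have hb' : b.Realize (⇑f₂) := hf₂ _ (hB2 _ (List.mem_append_right _ hb))
      show Structure.RelMap b.R (w ∘ (Sum.map Sum.inl id ∘ b.args))
      have harg : w ∘ (Sum.map Sum.inl id ∘ b.args) = (⇑f₂) ∘ b.args := by
        funext x
        exact hw2 (b.args x)
      rw [harg]
      exact hb'
  have hC := hχ C hCsat w hbig
  cases χ with
  | none => exact hC.elim
  | some b =>
    -- hC : (b.map Sum.inl).Realize w in C, with w ∘ Sum.inl = f₁
    have hb : b.Realize (⇑f₁) := hC
    have hb' : @RelAtom.Realize L _ _ (canonStruct Φ ψ₁) b id :=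
      (@Embedding.map_rel L _ _ (canonStruct Φ ψ₁) C.str f₁ _ b.R b.args).mp hb
    exact (canon_realize_iff Φ ψ₁ b).mp hb'

end AmalgamationHard
end

section
/- Let Φ be a universal Horn sentence over a finite relational signature τ. Suppose that for all conjunctions of atomic τ-formulas φ(x̄), φ₁(x̄,y₁), φ₂(x̄,y₂) such that φ(x̄) ∧ φ_i(x̄,y_i) ⊑_Φ φ(x̄) for i ∈ {1,2}, it holds that φ(x̄) ∧ φ₁(x̄,y₁) ∧ φ₂(x̄,y₂) ⊑_Φ φ(x̄) ∧ φ₁(x̄,y₁). Then Models(Φ) has the one-point strong amalgamation property. -/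
open FirstOrder Language CategoryTheory

namespace AmalgamationHard

variable {L : FirstOrder.Language.{0, 0}}

/-! ### Auxiliary lemmas -/

lemma RelAtom.realize_map {V W M : Type} [L.Structure M] (f : V → W) (a : RelAtom L V)
    (v : W → M) : (a.map f).Realize v ↔ a.Realize (v ∘ f) := Iff.rfl

lemma RelAtom.map_map {U V W : Type} (f : U → V) (g : V → W) (a : RelAtom L U) :
    (a.map f).map g = a.map (g ∘ f) := rfl

lemma realize_congr {V M : Type} [L.Structure M] {a : RelAtom L V} {v w : V → M}
    (h : ∀ x, v x = w x) : a.Realize v ↔ a.Realize w := by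
  have : v = w := funext h
  rw [this]

lemma realize_ext {V M : Type} [L.Structure M] {a : RelAtom L V} {v w : V → M}
    (h : ∀ x, v x = w x) (ha : a.Realize w) : a.Realize v :=
  (realize_congr h).mpr ha

lemma entails_of_mem {Φ : List (HornClause L ℕ)} {V : Type} {p : List (RelAtom L V)}
    {a : RelAtom L V} (h : a ∈ p) : Entails Φ p (some a) :=
  fun _ _ _ v hp => hp a h

def realAtomEquiv (V : Type) : RelAtom L V ≃ Σ p : (Σ l, L.Relations l), (Fin p.1 → V) where
  toFun a := ⟨⟨a.n, a.R⟩, a.args⟩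
  invFun p := ⟨p.1.1, p.1.2, p.2⟩
  left_inv a := rfl
  right_inv p := rfl

lemma finite_relAtom (V : Type) [Finite V] [Finite L.Symbols] : Finite (RelAtom L V) := by
  have : Finite (Σ l, L.Relations l) :=
    Finite.of_injective (Sum.inr : (Σ l, L.Relations l) → L.Symbols) Sum.inr_injective
  exact Finite.of_equiv _ (realAtomEquiv (L := L) V).symm

/-- Build an embedding in a relational language from an injective map that preserves and
reflects relations. -/
def mkEmbedding [L.IsRelational] {M N : Type} [L.Structure M] [L.Structure N] (f : M ↪ N)
    (hr : ∀ {n} (r : L.Relations n) (x : Fin n → M),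
      Structure.RelMap r (f ∘ x) ↔ Structure.RelMap r x) :
    M ↪[L] N where
  toEmbedding := f
  map_fun' := fun {n} F _ => isEmptyElim F
  map_rel' := hr

theorem subsumption_implies_onePointStrongAP [L.IsRelational] [Finite L.Symbols]
    (Φ : List (HornClause L ℕ)) (h : SubsumptionCondition Φ) :
    HasOnePointStrongAP (Models Φ) := by
  classical
  intro A B₁ B₂ e₁ e₂ hA hB₁ hB₂ hc₁ hc₂
  obtain ⟨hAfin, hAsat⟩ := hA
  obtain ⟨hB₁fin, hB₁sat⟩ := hB₁
  obtain ⟨hB₂fin, hB₂sat⟩ := hB₂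
  set m := Nat.card A with hm
  have eA : Fin m ≃ A := (Finite.equivFinOfCardEq rfl).symm
  -- the extra points of B₁ and B₂
  have hb : ∀ (B : Bundled.{0} L.Structure), Finite B → Nat.card B = m + 1 →
      ∀ e : A ↪[L] B, ∃ b : B, ∀ a : A, e a ≠ b := by
    intro B hBfin hcB e
    by_contra hcon
    push_neg at hcon
    have hs : Function.Surjective e := by
      intro b
      obtain ⟨a, ha⟩ := hcon b
      exact ⟨a, ha⟩
    have : Nat.card A = Nat.card B := Nat.card_eq_of_bijective e ⟨e.injective, hs⟩
    omega
  obtain ⟨b₁, hb₁⟩ := hb B₁ hB₁fin hc₁ e₁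
  obtain ⟨b₂, hb₂⟩ := hb B₂ hB₂fin hc₂ e₂
  -- bijections Fin m ⊕ Unit ≃ Bᵢ
  have hg : ∀ (B : Bundled.{0} L.Structure), Finite B → Nat.card B = m + 1 →
      ∀ (e : A ↪[L] B) (b : B), (∀ a : A, e a ≠ b) →
      Function.Bijective (Sum.elim (fun i : Fin m => e (eA i)) (fun _ : Unit => b)) := by
    intro B hBfin hcB e b hbext
    refine (Nat.bijective_iff_injective_and_card _).mpr ⟨?_, by simp [hcB]⟩
    rintro (i | ⟨⟩) (j | ⟨⟩) hij
    · simp only [Sum.elim_inl] at hij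
      exact congrArg Sum.inl (eA.injective (e.injective hij))
    · exact absurd hij (hbext (eA i))
    · exact absurd hij.symm (hbext (eA j))
    · rfl
  let g₁f : Fin m ⊕ Unit → B₁ := Sum.elim (fun i : Fin m => e₁ (eA i)) (fun _ : Unit => b₁)
  let g₂f : Fin m ⊕ Unit → B₂ := Sum.elim (fun i : Fin m => e₂ (eA i)) (fun _ : Unit => b₂)
  let g₁ : (Fin m ⊕ Unit) ≃ B₁ := Equiv.ofBijective g₁f (hg B₁ hB₁fin hc₁ e₁ b₁ hb₁)
  let g₂ : (Fin m ⊕ Unit) ≃ B₂ := Equiv.ofBijective g₂f (hg B₂ hB₂fin hc₂ e₂ b₂ hb₂)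
  -- the atomic diagrams
  haveI : Finite (RelAtom L (Fin m)) := finite_relAtom _
  haveI : Finite (RelAtom L (Fin m ⊕ Unit)) := finite_relAtom _
  haveI := Fintype.ofFinite (RelAtom L (Fin m))
  haveI := Fintype.ofFinite (RelAtom L (Fin m ⊕ Unit))
  let φ : List (RelAtom L (Fin m)) :=
    (Finset.univ.filter (fun a : RelAtom L (Fin m) => a.Realize (fun i => (eA i : A)))).toList
  have hφ : ∀ a : RelAtom L (Fin m), a ∈ φ ↔ a.Realize (fun i => (eA i : A)) := by
    intro a; simp [φ, Finset.mem_toList]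
  let φ₁ : List (RelAtom L (Fin m ⊕ Unit)) :=
    (Finset.univ.filter (fun a : RelAtom L (Fin m ⊕ Unit) => a.Realize g₁f)).toList
  have hφ₁ : ∀ a : RelAtom L (Fin m ⊕ Unit), a ∈ φ₁ ↔ a.Realize g₁f := by
    intro a; simp [φ₁, Finset.mem_toList]
  let φ₂ : List (RelAtom L (Fin m ⊕ Unit)) :=
    (Finset.univ.filter (fun a : RelAtom L (Fin m ⊕ Unit) => a.Realize g₂f)).toList
  have hφ₂ : ∀ a : RelAtom L (Fin m ⊕ Unit), a ∈ φ₂ ↔ a.Realize g₂f := by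
    intro a; simp [φ₂, Finset.mem_toList]
  -- all atoms of φ.map inl ++ φᵢ are realized in Bᵢ under gᵢf
  have hrealφ : ∀ (B : Bundled.{0} L.Structure) (e : A ↪[L] B) (b : B)
      (gf : Fin m ⊕ Unit → B), gf = Sum.elim (fun i : Fin m => e (eA i)) (fun _ : Unit => b) →
      ∀ a ∈ φ.map (RelAtom.map Sum.inl), a.Realize gf := by
    rintro B e b gf rfl a ha
    simp only [List.mem_map] at ha
    obtain ⟨c, hc, rfl⟩ := ha
    rw [RelAtom.realize_map]
    have : ∀ x, (Sum.elim (fun i : Fin m => e (eA i)) (fun _ : Unit => b) ∘ Sum.inl) x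
        = (e ∘ fun i => (eA i : A)) x := fun x => rfl
    rw [realize_congr this]
    exact (e.map_rel _ _).mpr ((hφ c).mp hc)
  have hreal₁ : ∀ a ∈ φ.map (RelAtom.map Sum.inl) ++ φ₁, a.Realize g₁f := by
    intro a ha
    rcases List.mem_append.mp ha with ha | ha
    · exact hrealφ B₁ e₁ b₁ g₁f rfl a ha
    · exact (hφ₁ a).mp ha
  have hreal₂ : ∀ a ∈ φ.map (RelAtom.map Sum.inl) ++ φ₂, a.Realize g₂f := by
    intro a ha
    rcases List.mem_append.mp ha with ha | ha
    · exact hrealφ B₂ e₂ b₂ g₂f rfl a ha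
    · exact (hφ₂ a).mp ha
  -- the subsumption hypotheses of the condition
  have hsub₁ : Subsumes Φ (φ.map (RelAtom.map Sum.inl) ++ φ₁) φ := by
    intro χ hχ
    have hB := hχ B₁ hB₁sat g₁f hreal₁
    cases χ with
    | none => exact hB.elim
    | some c =>
      apply entails_of_mem
      rw [hφ]
      have h2 : c.Realize (⇑e₁ ∘ fun i => (eA i : A)) :=
        realize_ext (w := g₁f ∘ Sum.inl) (fun x => rfl) hB
      exact (e₁.map_rel _ _).mp h2
  have hsub₂ : Subsumes Φ (φ.map (RelAtom.map Sum.inl) ++ φ₂) φ := by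
    intro χ hχ
    have hB := hχ B₂ hB₂sat g₂f hreal₂
    cases χ with
    | none => exact hB.elim
    | some c =>
      apply entails_of_mem
      rw [hφ]
      have h2 : c.Realize (⇑e₂ ∘ fun i => (eA i : A)) :=
        realize_ext (w := g₂f ∘ Sum.inl) (fun x => rfl) hB
      exact (e₂.map_rel _ _).mp h2
  have S₁ := h m φ φ₁ φ₂ hsub₁ hsub₂
  have S₂ := h m φ φ₂ φ₁ hsub₂ hsub₁
  -- the amalgam
  let ψ : List (RelAtom L ((Fin m ⊕ Unit) ⊕ Unit)) :=
    φ.map (RelAtom.map (Sum.inl ∘ Sum.inl)) ++ φ₁.map (RelAtom.map Sum.inl)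
      ++ φ₂.map (RelAtom.map (Sum.map Sum.inl id))
  let ψ' : List (RelAtom L ((Fin m ⊕ Unit) ⊕ Unit)) :=
    φ.map (RelAtom.map (Sum.inl ∘ Sum.inl)) ++ φ₂.map (RelAtom.map Sum.inl)
      ++ φ₁.map (RelAtom.map (Sum.map Sum.inl id))
  letI Cstr : L.Structure ((Fin m ⊕ Unit) ⊕ Unit) :=
    { funMap := fun {n} F _ => isEmptyElim F
      RelMap := fun {n} R t => Entails Φ ψ (some ⟨n, R, t⟩) }
  -- transfer of entailment from ψ to ψ' by the swap σ
  let σ : (Fin m ⊕ Unit) ⊕ Unit → (Fin m ⊕ Unit) ⊕ Unit :=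
    Sum.elim (Sum.elim (Sum.inl ∘ Sum.inl) (fun _ => Sum.inr ())) (fun _ => Sum.inl (Sum.inr ()))
  have hσ1 : ∀ x : Fin m, σ (Sum.inl (Sum.inl x)) = Sum.inl (Sum.inl x) := fun _ => rfl
  have hσ2 : ∀ x : Fin m ⊕ Unit, σ (Sum.inl x) = Sum.map Sum.inl id x := by
    rintro (x | ⟨⟩) <;> rfl
  have hσ3 : ∀ x : Fin m ⊕ Unit, σ (Sum.map Sum.inl id x) = Sum.inl x := by
    rintro (x | ⟨⟩) <;> rfl
  have hswap : ∀ κ : Option (RelAtom L ((Fin m ⊕ Unit) ⊕ Unit)),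
      Entails Φ ψ κ → Entails Φ ψ' (κ.map (RelAtom.map σ)) := by
    intro κ hκ M _ hM v hv
    have hprem : ∀ a ∈ ψ, a.Realize (v ∘ σ) := by
      intro a ha
      simp only [ψ, List.mem_append, List.mem_map] at ha
      rcases ha with (⟨c, hc, rfl⟩ | ⟨c, hc, rfl⟩) | ⟨c, hc, rfl⟩
      · rw [RelAtom.realize_map]
        exact realize_ext (fun x => congrArg v (hσ1 x))
          (show c.Realize (v ∘ (Sum.inl ∘ Sum.inl)) from hv _ (by
            simp only [ψ', List.mem_append, List.mem_map]
            exact Or.inl (Or.inl ⟨c, hc, rfl⟩)))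
      · rw [RelAtom.realize_map]
        exact realize_ext (fun x => congrArg v (hσ2 x))
          (show c.Realize (v ∘ Sum.map Sum.inl id) from hv _ (by
            simp only [ψ', List.mem_append, List.mem_map]
            exact Or.inr ⟨c, hc, rfl⟩))
      · rw [RelAtom.realize_map]
        exact realize_ext (fun x => congrArg v (hσ3 x))
          (show c.Realize (v ∘ (Sum.inl : (Fin m ⊕ Unit) → (Fin m ⊕ Unit) ⊕ Unit)) from
            hv _ (by
              simp only [ψ', List.mem_append, List.mem_map]
              exact Or.inl (Or.inr ⟨c, hc, rfl⟩)))
    have := hκ M hM (v ∘ σ) hprem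
    cases κ with
    | none => exact this
    | some a => exact this
  -- the amalgam is consistent
  have hcon : ¬ Entails Φ ψ none := fun hE =>
    S₁ none hE B₁ hB₁sat g₁f hreal₁
  -- characterization of relations of C on the B₁-part
  have K2 : ∀ a : RelAtom L (Fin m ⊕ Unit),
      Entails Φ ψ (some (a.map Sum.inl)) ↔ a.Realize g₁f := by
    intro a
    constructor
    · intro hE
      exact S₁ (some a) hE B₁ hB₁sat g₁f hreal₁
    · intro ha
      apply entails_of_mem
      simp only [ψ, List.mem_append, List.mem_map]
      exact Or.inl (Or.inr ⟨a, (hφ₁ a).mpr ha, rfl⟩)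
  -- characterization of relations of C on the B₂-part
  have K3 : ∀ a : RelAtom L (Fin m ⊕ Unit),
      Entails Φ ψ (some (a.map (Sum.map Sum.inl id))) ↔ a.Realize g₂f := by
    intro a
    constructor
    · intro hE
      have hE' := hswap (some (a.map (Sum.map Sum.inl id))) hE
      have heq : ((a.map (Sum.map Sum.inl id)).map σ) = a.map Sum.inl := by
        show RelAtom.mk a.n a.R (σ ∘ (Sum.map Sum.inl id ∘ a.args))
          = RelAtom.mk a.n a.R (Sum.inl ∘ a.args)
        congr 1
        funext x
        exact hσ3 (a.args x)
      have hE'' : Entails Φ ψ' (some (a.map Sum.inl)) := by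
        rw [← heq]; exact hE'
      exact S₂ (some a) hE'' B₂ hB₂sat g₂f hreal₂
    · intro ha
      apply entails_of_mem
      simp only [ψ, List.mem_append, List.mem_map]
      exact Or.inr ⟨a, (hφ₂ a).mpr ha, rfl⟩
  -- C satisfies Φ
  have hCsat : Satisfies Φ ((Fin m ⊕ Unit) ⊕ Unit) := by
    intro c hc v hprem
    have key : Entails Φ ψ (Option.map (RelAtom.map v) c.concl) := by
      intro M _ hM w hw
      have hpM : ∀ a ∈ c.prem, a.Realize (w ∘ v) := by
        intro a ha
        exact (hprem a ha : Entails Φ ψ (some (a.map v))) M hM w hw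
      have := hM c hc (w ∘ v) hpM
      cases hcc : c.concl with
      | none => rw [hcc] at this; exact this
      | some a => rw [hcc] at this; exact this
    cases hcc : c.concl with
    | none => rw [hcc] at key; exact (hcon key).elim
    | some a => rw [hcc] at key; exact key
  -- the embeddings
  let f₁ : B₁ ↪[L] ((Fin m ⊕ Unit) ⊕ Unit) :=
    mkEmbedding ⟨fun b => Sum.inl (g₁.symm b), Sum.inl_injective.comp g₁.symm.injective⟩
      (by
        intro n r x
        have heq : (g₁f ∘ fun i => g₁.symm (x i)) = x := funext fun i =>
          g₁.apply_symm_apply (x i)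
        constructor
        · intro hx
          have hr := (K2 ⟨n, r, fun i => g₁.symm (x i)⟩).mp hx
          have hr' : Structure.RelMap r (g₁f ∘ fun i => g₁.symm (x i)) := hr
          rwa [heq] at hr'
        · intro hx
          apply (K2 ⟨n, r, fun i => g₁.symm (x i)⟩).mpr
          show Structure.RelMap r (g₁f ∘ fun i => g₁.symm (x i))
          rw [heq]
          exact hx)
  let f₂ : B₂ ↪[L] ((Fin m ⊕ Unit) ⊕ Unit) :=
    mkEmbedding ⟨fun b => Sum.map Sum.inl id (g₂.symm b),
        (Sum.map_injective.mpr ⟨Sum.inl_injective, fun _ _ h => h⟩).comp g₂.symm.injective⟩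
      (by
        intro n r x
        have heq : (g₂f ∘ fun i => g₂.symm (x i)) = x := funext fun i =>
          g₂.apply_symm_apply (x i)
        constructor
        · intro hx
          have hr := (K3 ⟨n, r, fun i => g₂.symm (x i)⟩).mp hx
          have hr' : Structure.RelMap r (g₂f ∘ fun i => g₂.symm (x i)) := hr
          rwa [heq] at hr'
        · intro hx
          apply (K3 ⟨n, r, fun i => g₂.symm (x i)⟩).mpr
          show Structure.RelMap r (g₂f ∘ fun i => g₂.symm (x i))
          rw [heq]
          exact hx)
  refine ⟨⟨(Fin m ⊕ Unit) ⊕ Unit, Cstr⟩, f₁, f₂, ⟨by infer_instance, hCsat⟩, ?_, ?_, ?_⟩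
  · -- f₁ ∘ e₁ = f₂ ∘ e₂
    ext a
    have h1 : g₁.symm (e₁ a) = Sum.inl (eA.symm a) := by
      apply g₁.injective
      rw [g₁.apply_symm_apply]
      show e₁ a = g₁f (Sum.inl (eA.symm a))
      simp only [g₁f, Sum.elim_inl, eA.apply_symm_apply]
    have h2 : g₂.symm (e₂ a) = Sum.inl (eA.symm a) := by
      apply g₂.injective
      rw [g₂.apply_symm_apply]
      show e₂ a = g₂f (Sum.inl (eA.symm a))
      simp only [g₂f, Sum.elim_inl, eA.apply_symm_apply]
    show Sum.inl (g₁.symm (e₁ a)) = Sum.map Sum.inl id (g₂.symm (e₂ a))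
    rw [h1, h2]
    rfl
  · -- ranges
    have hr₁ : Set.range ⇑f₁ = Set.range (Sum.inl : (Fin m ⊕ Unit) → (Fin m ⊕ Unit) ⊕ Unit) := by
      show Set.range (fun b => Sum.inl (g₁.symm b)) = _
      rw [show (fun b => Sum.inl (g₁.symm b)) = Sum.inl ∘ ⇑g₁.symm from rfl,
        g₁.symm.surjective.range_comp]
    have hr₂ : Set.range ⇑f₂
        = Set.range (Sum.map Sum.inl id : (Fin m ⊕ Unit) → (Fin m ⊕ Unit) ⊕ Unit) := by
      show Set.range (fun b => Sum.map Sum.inl id (g₂.symm b)) = _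
      rw [show (fun b => Sum.map Sum.inl id (g₂.symm b)) = Sum.map Sum.inl id ∘ ⇑g₂.symm from
        rfl, g₂.symm.surjective.range_comp]
    have hrc : Set.range ⇑(f₁.comp e₁)
        = Set.range ((Sum.inl ∘ Sum.inl : Fin m → (Fin m ⊕ Unit) ⊕ Unit)) := by
      have hfc : ⇑(f₁.comp e₁) = (Sum.inl ∘ Sum.inl : Fin m → (Fin m ⊕ Unit) ⊕ Unit) ∘
          ⇑eA.symm := by
        funext a
        show Sum.inl (g₁.symm (e₁ a)) = Sum.inl (Sum.inl (eA.symm a))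
        congr 1
        apply g₁.injective
        rw [g₁.apply_symm_apply]
        show e₁ a = g₁f (Sum.inl (eA.symm a))
        simp only [g₁f, Sum.elim_inl, eA.apply_symm_apply]
      rw [hfc, eA.symm.surjective.range_comp]
    rw [hr₁, hr₂, hrc]
    ext c
    simp only [Set.mem_inter_iff, Set.mem_range]
    constructor
    · rintro ⟨⟨y₁, rfl⟩, y₂, h₂⟩
      rcases y₁ with x | ⟨⟩
      · exact ⟨x, rfl⟩
      · rcases y₂ with x | ⟨⟩ <;> simp [Sum.map] at h₂
    · rintro ⟨x, rfl⟩
      exact ⟨⟨Sum.inl x, rfl⟩, Sum.inl x, rfl⟩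
  · -- equal ranges of the compositions
    have hrc : Set.range ⇑(f₁.comp e₁)
        = Set.range ((Sum.inl ∘ Sum.inl : Fin m → (Fin m ⊕ Unit) ⊕ Unit)) := by
      have hfc : ⇑(f₁.comp e₁) = (Sum.inl ∘ Sum.inl : Fin m → (Fin m ⊕ Unit) ⊕ Unit) ∘
          ⇑eA.symm := by
        funext a
        show Sum.inl (g₁.symm (e₁ a)) = Sum.inl (Sum.inl (eA.symm a))
        congr 1
        apply g₁.injective
        rw [g₁.apply_symm_apply]
        show e₁ a = g₁f (Sum.inl (eA.symm a))
        simp only [g₁f, Sum.elim_inl, eA.apply_symm_apply]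
      rw [hfc, eA.symm.surjective.range_comp]
    have hrc₂ : Set.range ⇑(f₂.comp e₂)
        = Set.range ((Sum.inl ∘ Sum.inl : Fin m → (Fin m ⊕ Unit) ⊕ Unit)) := by
      have hfc : ⇑(f₂.comp e₂) = (Sum.inl ∘ Sum.inl : Fin m → (Fin m ⊕ Unit) ⊕ Unit) ∘
          ⇑eA.symm := by
        funext a
        show Sum.map Sum.inl id (g₂.symm (e₂ a)) = Sum.inl (Sum.inl (eA.symm a))
        have h2 : g₂.symm (e₂ a) = Sum.inl (eA.symm a) := by
          apply g₂.injective
          rw [g₂.apply_symm_apply]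
          show e₂ a = g₂f (Sum.inl (eA.symm a))
          simp only [g₂f, Sum.elim_inl, eA.apply_symm_apply]
        rw [h2]
        rfl
      rw [hfc, eA.symm.surjective.range_comp]
    rw [hrc, hrc₂]

end AmalgamationHard
end
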